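/- Let β ≥ 1 and 0 < η < min{216/(49β²), 6/(7β)}. Let X ∈ ℝ^{n×p} satisfy ‖XᵀX − I_p‖_F ≤ 1/6, let Y ∈ ℝ^{n×p} satisfy ‖Y‖_F ≤ c for some c > 0, and set X⁺ = X − ηβ·X(XᵀX − I_p) + ηY. Then ‖(X⁺)ᵀX⁺ − I_p‖_F ≤ (1 − (5/6)ηβ)²·‖XᵀX − I_p‖_F + η(1 + 3c) + η²c². -/

import Mathlib

open Matrix BigOperators Finset Kronecker

/- Equip matrix spaces with the Frobenius norm (finite-dimensional, so the resulting calculus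
notions such as `fderiv`/`Differentiable` are norm-independent). -/
attribute [local instance] Matrix.frobeniusNormedAddCommGroup Matrix.frobeniusNormedSpace

/-- The Frobenius norm of a real matrix. -/
noncomputable def frob {m k : Type*} [Fintype m] [Fintype k] (A : Matrix m k ℝ) : ℝ :=
  Real.sqrt (∑ i, ∑ j, (A i j) ^ 2)

/-- The trace inner product ⟨A, B⟩ = tr(AᵀB) of real matrices. -/
noncomputable def minner {m k : Type*} [Fintype m] [Fintype k] (A B : Matrix m k ℝ) : ℝ :=
  (Aᵀ * B).trace

/-- The symmetric part sym(B) = (B + Bᵀ)/2 of a square matrix. -/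
noncomputable def symPart {k : Type*} (B : Matrix k k ℝ) : Matrix k k ℝ :=
  (1 / 2 : ℝ) • (B + Bᵀ)

/-- The generalized Riemannian gradient G(X) = ∇f(X)((3/2)I - (1/2)XᵀX) - X·sym(Xᵀ∇f(X)),
expressed in terms of the Euclidean gradient matrix `Gf = ∇f(X)`. -/
noncomputable def Gdir {n p : ℕ} (Gf X : Matrix (Fin n) (Fin p) ℝ) :
    Matrix (Fin n) (Fin p) ℝ :=
  Gf * ((3 / 2 : ℝ) • (1 : Matrix (Fin p) (Fin p) ℝ) - (1 / 2 : ℝ) • (Xᵀ * X))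
    - X * symPart (Xᵀ * Gf)

/-- The feasibility direction E(X) = X(XᵀX - I). -/
noncomputable def Edir {n p : ℕ} (X : Matrix (Fin n) (Fin p) ℝ) :
    Matrix (Fin n) (Fin p) ℝ :=
  X * (Xᵀ * X - 1)

/-- The spectral norm (largest singular value) of a real matrix, as the operator norm of the
associated Euclidean linear map. -/
noncomputable def specNorm {m k : Type*} [Fintype m] [Fintype k] [DecidableEq k]
    (A : Matrix m k ℝ) : ℝ :=
  ‖LinearMap.toContinuousLinearMap (Matrix.toEuclideanLin A)‖

/-- The smallest singular value of a real matrix: the square root of the smallest eigenvalue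
of AᵀA (= AᴴA over ℝ). -/
noncomputable def sigmaMin {m k : Type*} [Fintype m] [Fintype k] [DecidableEq m] [DecidableEq k]
    (A : Matrix m k ℝ) : ℝ :=
  Real.sqrt (⨅ i, (Matrix.isHermitian_conjTranspose_mul_self A).eigenvalues i)

/-!
Write `D = XᵀX - I` and `t = ηβ`, so that `X⁺ = U + ηY` with `U = X(I - tD)`. Since `D` commutes
with `XᵀX = I + D`, `UᵀU - I = (1 - 2t)D + (t² - 2t)D² + t²D³`, whose Frobenius norm is at most
`(1 - 5t/6)²‖D‖ + (49/216)t²` when `‖D‖ ≤ 1/6`; the step-size condition `ηβ² < 216/49` bounds the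
last term by `η`. The cross term `UᵀY` is controlled by `‖UᵀY‖² ≤ (1 + ‖UᵀU - I‖)‖Y‖²`, which
gives `‖UᵀY‖ ≤ (3/2)‖Y‖`.
-/

section Frobenius

variable {m k : Type*} [Fintype m] [Fintype k]

theorem frob_eq_norm (A : Matrix m k ℝ) : frob A = ‖A‖ := by
  rw [frobenius_norm_def, frob, Real.sqrt_eq_rpow]
  simp only [Real.norm_eq_abs, Real.rpow_two, sq_abs]

theorem norm_sq_eq_sum (A : Matrix m k ℝ) : ‖A‖ ^ 2 = ∑ i, ∑ j, A i j ^ 2 := by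
  rw [← frob_eq_norm, frob, Real.sq_sqrt (by positivity)]

theorem trace_transpose_mul_eq_sum (A B : Matrix m k ℝ) :
    (Aᵀ * B).trace = ∑ i, ∑ j, A i j * B i j := by
  simp only [trace, Matrix.diag, mul_apply, transpose_apply]
  exact Finset.sum_comm

theorem norm_sq_eq_trace (A : Matrix m k ℝ) : ‖A‖ ^ 2 = (Aᵀ * A).trace := by
  rw [norm_sq_eq_sum, trace_transpose_mul_eq_sum]
  simp only [sq]

theorem trace_transpose_mul_le (A B : Matrix m k ℝ) : (Aᵀ * B).trace ≤ ‖A‖ * ‖B‖ := by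
  have hCS := Finset.sum_mul_sq_le_sq_mul_sq Finset.univ
    (fun ij : m × k => A ij.1 ij.2) (fun ij : m × k => B ij.1 ij.2)
  simp only [Fintype.sum_prod_type, ← trace_transpose_mul_eq_sum, ← norm_sq_eq_sum,
    ← mul_pow] at hCS
  exact (abs_le_of_sq_le_sq' hCS (by positivity)).2

end Frobenius

section Gram

variable {l m k : Type*} [Fintype l] [Fintype m] [Fintype k] [DecidableEq k]

theorem norm_mul_sq_le (X : Matrix m k ℝ) (Z : Matrix k l ℝ) :
    ‖X * Z‖ ^ 2 ≤ (1 + ‖Xᵀ * X - 1‖) * ‖Z‖ ^ 2 := by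
  have hsplit : ‖X * Z‖ ^ 2 = ‖Z‖ ^ 2 + (Zᵀ * ((Xᵀ * X - 1) * Z)).trace := by
    rw [norm_sq_eq_trace, norm_sq_eq_trace, ← trace_add, transpose_mul, Matrix.sub_mul,
      Matrix.one_mul, Matrix.mul_sub, Matrix.mul_assoc, Matrix.mul_assoc, add_sub_cancel]
  have hcross : (Zᵀ * ((Xᵀ * X - 1) * Z)).trace ≤ ‖Xᵀ * X - 1‖ * ‖Z‖ ^ 2 := by
    calc _ ≤ ‖Z‖ * ‖(Xᵀ * X - 1) * Z‖ := trace_transpose_mul_le _ _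
      _ ≤ ‖Z‖ * (‖Xᵀ * X - 1‖ * ‖Z‖) := by gcongr; exact frobenius_norm_mul _ _
      _ = _ := by ring
  linarith

theorem norm_transpose_mul_sq_le (X : Matrix m k ℝ) (Y : Matrix m l ℝ) :
    ‖Xᵀ * Y‖ ^ 2 ≤ (1 + ‖Xᵀ * X - 1‖) * ‖Y‖ ^ 2 := by
  set Z := Xᵀ * Y with hZ
  have hZY : ‖Z‖ ^ 2 ≤ ‖Y‖ * ‖X * Z‖ := by
    calc ‖Z‖ ^ 2 = (Yᵀ * (X * Z)).trace := by
          rw [norm_sq_eq_trace, hZ, transpose_mul, transpose_transpose, Matrix.mul_assoc]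
      _ ≤ _ := trace_transpose_mul_le _ _
  rcases (norm_nonneg Z).eq_or_lt with hZ0 | hZ0
  · rw [← hZ0, zero_pow two_ne_zero]
    positivity
  refine le_of_mul_le_mul_right ?_ (pow_pos hZ0 2)
  calc ‖Z‖ ^ 2 * ‖Z‖ ^ 2 ≤ (‖Y‖ * ‖X * Z‖) ^ 2 := by rw [← sq]; gcongr
    _ = ‖Y‖ ^ 2 * ‖X * Z‖ ^ 2 := by ring
    _ ≤ ‖Y‖ ^ 2 * ((1 + ‖Xᵀ * X - 1‖) * ‖Z‖ ^ 2) := by gcongr; exact norm_mul_sq_le X Z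
    _ = _ := by ring

theorem norm_gram_add_smul_sub_one_le (U Y : Matrix m k ℝ) {η : ℝ} (hη : 0 ≤ η) :
    ‖(U + η • Y)ᵀ * (U + η • Y) - 1‖
      ≤ ‖Uᵀ * U - 1‖ + 2 * η * ‖Uᵀ * Y‖ + η ^ 2 * ‖Y‖ ^ 2 := by
  have hexpand : (U + η • Y)ᵀ * (U + η • Y) - 1
      = (Uᵀ * U - 1) + η • (Uᵀ * Y + (Uᵀ * Y)ᵀ) + η ^ 2 • (Yᵀ * Y) := by
    simp only [transpose_add, transpose_smul, transpose_mul, transpose_transpose, Matrix.add_mul,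
      Matrix.mul_add, Matrix.smul_mul, Matrix.mul_smul, smul_add, smul_smul]
    module
  rw [hexpand]
  calc _ ≤ ‖Uᵀ * U - 1‖ + ‖η • (Uᵀ * Y + (Uᵀ * Y)ᵀ)‖ + ‖η ^ 2 • (Yᵀ * Y)‖ := norm_add₃_le
    _ ≤ ‖Uᵀ * U - 1‖ + η * (‖Uᵀ * Y‖ + ‖Uᵀ * Y‖) + η ^ 2 * (‖Y‖ * ‖Y‖) := by
      rw [norm_smul, norm_smul, Real.norm_of_nonneg hη, Real.norm_of_nonneg (sq_nonneg η)]
      gcongr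
      · exact (norm_add_le _ _).trans_eq (by rw [frobenius_norm_transpose])
      · simpa only [frobenius_norm_transpose] using frobenius_norm_mul Yᵀ Y
    _ = _ := by ring

end Gram

theorem feasibility_poly_le {t d : ℝ} (ht0 : 0 ≤ t) (ht2 : t ≤ 2) (hd0 : 0 ≤ d)
    (hd : d ≤ 1 / 6) :
    |1 - 2 * t| * d + (2 * t - t ^ 2) * d ^ 2 + t ^ 2 * d ^ 3
      ≤ (1 - 5 / 6 * t) ^ 2 * d + 49 / 216 * t ^ 2 := by
  have hslack : (2 * t - t ^ 2) * d + t ^ 2 * d ^ 2 ≤ (2 * t - t ^ 2) / 6 + t ^ 2 / 36 := by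
    have : d ^ 2 ≤ 1 / 36 := by nlinarith
    nlinarith [mul_le_mul_of_nonneg_left hd (by nlinarith : 0 ≤ 2 * t - t ^ 2)]
  rcases le_total (2 * t) 1 with h | h
  · rw [abs_of_nonneg (by linarith)]
    nlinarith [mul_le_mul_of_nonneg_left hslack hd0]
  · -- here `2t - 1` may exceed `(1 - 5t/6)²`; the `49/216 t²` term pays for the difference
    rw [abs_of_nonpos (by linarith)]
    nlinarith [mul_le_mul_of_nonneg_left hslack hd0, sq_nonneg (79 * t - 72)]

section FeasibilityStep

variable {m k : Type*} [Fintype m] [Fintype k] [DecidableEq k]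

theorem gram_feasibility_step_sub_one {X : Matrix m k ℝ} {D : Matrix k k ℝ}
    (hD : Xᵀ * X = 1 + D) (t : ℝ) :
    (X - t • (X * D))ᵀ * (X - t • (X * D)) - 1
      = (1 - 2 * t) • D + (t ^ 2 - 2 * t) • (D * D) + t ^ 2 • (D * (D * D)) := by
  have hDT : Dᵀ = D := by
    have h := congrArg transpose hD
    rw [transpose_mul, transpose_transpose, hD, transpose_add, transpose_one] at h
    exact (add_left_cancel h).symm
  have hfactor : X - t • (X * D) = X * (1 - t • D) := by
    rw [Matrix.mul_sub, Matrix.mul_one, Matrix.mul_smul]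
  rw [hfactor, transpose_mul, transpose_sub, transpose_one, transpose_smul, hDT,
    Matrix.mul_assoc, ← Matrix.mul_assoc Xᵀ, hD]
  simp only [Matrix.mul_sub, Matrix.sub_mul, Matrix.add_mul, Matrix.mul_add, Matrix.smul_mul,
    Matrix.mul_smul, Matrix.one_mul, Matrix.mul_one]
  module

theorem norm_gram_feasibility_step_sub_one_le {X : Matrix m k ℝ} {D : Matrix k k ℝ}
    (hD : Xᵀ * X = 1 + D) (hD6 : ‖D‖ ≤ 1 / 6) {t : ℝ} (ht0 : 0 ≤ t) (ht2 : t ≤ 2) :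
    ‖(X - t • (X * D))ᵀ * (X - t • (X * D)) - 1‖
      ≤ (1 - 5 / 6 * t) ^ 2 * ‖D‖ + 49 / 216 * t ^ 2 := by
  have hD2 : ‖D * D‖ ≤ ‖D‖ ^ 2 := (frobenius_norm_mul D D).trans_eq (sq _).symm
  have hD3 : ‖D * (D * D)‖ ≤ ‖D‖ ^ 3 := by
    calc _ ≤ ‖D‖ * ‖D * D‖ := frobenius_norm_mul _ _
      _ ≤ ‖D‖ * ‖D‖ ^ 2 := by gcongr
      _ = _ := by ring
  rw [gram_feasibility_step_sub_one hD]
  calc _ ≤ ‖(1 - 2 * t) • D‖ + ‖(t ^ 2 - 2 * t) • (D * D)‖ + ‖t ^ 2 • (D * (D * D))‖ :=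
        norm_add₃_le
    _ ≤ |1 - 2 * t| * ‖D‖ + (2 * t - t ^ 2) * ‖D‖ ^ 2 + t ^ 2 * ‖D‖ ^ 3 := by
      rw [norm_smul, norm_smul, norm_smul, Real.norm_eq_abs, Real.norm_eq_abs,
        abs_of_nonpos (by nlinarith : t ^ 2 - 2 * t ≤ 0), neg_sub,
        Real.norm_of_nonneg (sq_nonneg t)]
      gcongr
      nlinarith
    _ ≤ _ := feasibility_poly_le ht0 ht2 (norm_nonneg D) hD6

end FeasibilityStep

theorem stmt16_general {n p : ℕ} (β : ℝ) (hβ : 1 ≤ β) (η : ℝ) (hη0 : 0 < η)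
    (hη : η < min (216 / (49 * β ^ 2)) (6 / (7 * β)))
    (X Y : Matrix (Fin n) (Fin p) ℝ)
    (hX : frob (Xᵀ * X - 1) ≤ 1 / 6)
    (c : ℝ) (hY : frob Y ≤ c)
    (Xp : Matrix (Fin n) (Fin p) ℝ)
    (hXp : Xp = X - (η * β) • (X * (Xᵀ * X - 1)) + η • Y) :
    frob (Xpᵀ * Xp - 1)
      ≤ (1 - 5 / 6 * η * β) ^ 2 * frob (Xᵀ * X - 1) + η * (1 + 3 * c) + η ^ 2 * c ^ 2 := by
  simp only [frob_eq_norm] at hX hY ⊢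
  subst hXp
  obtain ⟨hη₁, hη₂⟩ := lt_min_iff.mp hη
  have hβ0 : 0 < β := by linarith
  have hc : 0 ≤ c := (norm_nonneg Y).trans hY
  set t := η * β
  -- `t ^ 2 = η * (η β ^ 2)`, and the first step-size bound is `η β ^ 2 < 216 / 49`.
  have htη : 49 / 216 * t ^ 2 ≤ η := by
    have := (lt_div_iff₀ (by positivity)).mp hη₁
    nlinarith
  have ht67 : t < 6 / 7 := by
    have := (lt_div_iff₀ (by positivity)).mp hη₂
    nlinarith
  set D := Xᵀ * X - 1 with hD
  set U := X - t • (X * D)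
  have hU : ‖Uᵀ * U - 1‖ ≤ (1 - 5 / 6 * t) ^ 2 * ‖D‖ + 49 / 216 * t ^ 2 :=
    norm_gram_feasibility_step_sub_one_le (by rw [hD, add_sub_cancel]) hX (by positivity)
      (by linarith)
  have hUY : ‖Uᵀ * Y‖ ≤ 3 / 2 * c := by
    have hU54 : ‖Uᵀ * U - 1‖ ≤ 5 / 4 := by nlinarith [norm_nonneg D]
    refine (pow_le_pow_iff_left₀ (norm_nonneg _) (by positivity) two_ne_zero).mp ?_
    nlinarith [norm_transpose_mul_sq_le U Y, norm_nonneg Y]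
  calc _ ≤ ‖Uᵀ * U - 1‖ + 2 * η * ‖Uᵀ * Y‖ + η ^ 2 * ‖Y‖ ^ 2 :=
        norm_gram_add_smul_sub_one_le U Y hη0.le
    _ ≤ _ := by
      have hcross := mul_le_mul_of_nonneg_left hUY (by positivity : 0 ≤ 2 * η)
      have hquad : η ^ 2 * ‖Y‖ ^ 2 ≤ η ^ 2 * c ^ 2 := by gcongr
      rw [show 5 / 6 * η * β = 5 / 6 * t by ring]
      linarith

/-- One-step bound on the orthogonality violation. For `β ≥ 1`,
`0 < η < min{216/(49β²), 6/(7β)}`, `‖XᵀX - I‖_F ≤ 1/6`, `‖Y‖_F ≤ c` with `c > 0`, and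
`X⁺ = X - ηβX(XᵀX - I) + ηY`, it holds that
`‖(X⁺)ᵀX⁺ - I‖_F ≤ (1 - (5/6)ηβ)²‖XᵀX - I‖_F + η(1 + 3c) + η²c²`. -/
theorem stmt16 {n p : ℕ} (β : ℝ) (hβ : 1 ≤ β) (η : ℝ) (hη0 : 0 < η)
    (hη : η < min (216 / (49 * β ^ 2)) (6 / (7 * β)))
    (X Y : Matrix (Fin n) (Fin p) ℝ)
    (hX : frob (Xᵀ * X - 1) ≤ 1 / 6)
    (c : ℝ) (hc : 0 < c) (hY : frob Y ≤ c)
    (Xp : Matrix (Fin n) (Fin p) ℝ)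
    (hXp : Xp = X - (η * β) • (X * (Xᵀ * X - 1)) + η • Y) :
    frob (Xpᵀ * Xp - 1)
      ≤ (1 - 5 / 6 * η * β) ^ 2 * frob (Xᵀ * X - 1) + η * (1 + 3 * c) + η ^ 2 * c ^ 2 :=
  stmt16_general β hβ η hη0 hη X Y hX c hY Xp hXp
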